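/- In the ordinal line framework, suppose the mechanism (ρ, W) has distortion strictly smaller than 7, i.e., max(SW(I,P,0), SW(I,P,1)) < 7·SW(I,P, win(I)) for every instance I and every placement P of I. Then ρ(x) = 0 for every fraction x ∈ [3/4, 1], and ρ(x) = 1 for every fraction x ∈ [0, 1/4]. -/
import Mathlib


/-! Ordinal line framework: the two alternatives are the reals 0 and 1.  Every group has
total agent mass 1 and is summarized by the fraction `x ∈ [0,1]` of its mass that ranks
alternative 0 farthest; an instance is a finite nonempty multiset of fractions, modelled
as `frac : Fin n → ℝ` with `n > 0`.  A placement assigns to the occurrence `j` positions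
`pa j ≥ 1/2` (the mass preferring 0) and `pb j ≤ 1/2` (the mass preferring 1). -/

/-- Social welfare of alternative `z` in the instance `frac` under placement `(pa, pb)`. -/
noncomputable def swOrd {n : ℕ} (frac pa pb : Fin n → ℝ) (z : ℝ) : ℝ :=
  ∑ j, (frac j * |pa j - z| + (1 - frac j) * |pb j - z|)

/-- Winner of the instance `frac` under the mechanism `(ρ, W)`: `W` applied to the
multiset of group representatives. -/
noncomputable def winOrd (ρ : ℝ → ℝ) (W : Multiset ℝ → ℝ) {n : ℕ}
    (frac : Fin n → ℝ) : ℝ :=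
  W (Multiset.map (fun j => ρ (frac j)) Finset.univ.val)

/-- A valid placement: fractions lie in `[0,1]`, the mass preferring 0 is at positions
`≥ 1/2`, and the mass preferring 1 is at positions `≤ 1/2`. -/
def ValidPlacementOrd {n : ℕ} (frac pa pb : Fin n → ℝ) : Prop :=
  (∀ j, 0 ≤ frac j ∧ frac j ≤ 1) ∧ (∀ j, 1 / 2 ≤ pa j) ∧ (∀ j, pb j ≤ 1 / 2)

/-- A valid ordinal distributed mechanism: `ρ` assigns to every fraction a representative
in `{0,1}`, and `W` assigns to every finite nonempty multiset of representatives in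
`{0,1}` a winner occurring in it. -/
def ValidMechOrd (ρ : ℝ → ℝ) (W : Multiset ℝ → ℝ) : Prop :=
  (∀ x : ℝ, 0 ≤ x → x ≤ 1 → ρ x = 0 ∨ ρ x = 1) ∧
  (∀ m : Multiset ℝ, m ≠ 0 → (∀ q ∈ m, q = 0 ∨ q = 1) → W m ∈ m)

/-- Any ordinal mechanism with distortion strictly smaller than 7 must
represent a group with fraction `x ∈ [3/4, 1]` by alternative 0 and a group with fraction
`x ∈ [0, 1/4]` by alternative 1. -/

lemma winOrd_single (ρ : ℝ → ℝ) (W : Multiset ℝ → ℝ) (hmech : ValidMechOrd ρ W)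
    (x : ℝ) (hx0 : 0 ≤ x) (hx1 : x ≤ 1) :
    winOrd ρ W (fun _ : Fin 1 => x) = ρ x := by
  have hm : (Multiset.map (fun j : Fin 1 => ρ ((fun _ : Fin 1 => x) j))
      (Finset.univ : Finset (Fin 1)).val) = {ρ x} := by
    simp
  have h := hmech.2 {ρ x} (by simp) (by
    intro q hq
    rw [Multiset.mem_singleton] at hq
    subst hq; exact hmech.1 x hx0 hx1)
  unfold winOrd
  rw [hm]
  simpa using h

lemma swOrd_single (x pa pb z : ℝ) :
    swOrd (fun _ : Fin 1 => x) (fun _ => pa) (fun _ => pb) z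
      = x * |pa - z| + (1 - x) * |pb - z| := by
  simp [swOrd]

theorem ordinal_extreme_fraction_representative
    (ρ : ℝ → ℝ) (W : Multiset ℝ → ℝ) (hmech : ValidMechOrd ρ W)
    (hdist : ∀ (n : ℕ), 0 < n → ∀ frac pa pb : Fin n → ℝ,
      ValidPlacementOrd frac pa pb →
      max (swOrd frac pa pb 0) (swOrd frac pa pb 1) <
        7 * swOrd frac pa pb (winOrd ρ W frac)) :
    (∀ x : ℝ, 3 / 4 ≤ x → x ≤ 1 → ρ x = 0) ∧
    (∀ x : ℝ, 0 ≤ x → x ≤ 1 / 4 → ρ x = 1) := by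
  constructor
  · intro x hx34 hx1
    have hx0 : (0:ℝ) ≤ x := by linarith
    rcases hmech.1 x hx0 hx1 with h | h
    · exact h
    exfalso
    have hwin : winOrd ρ W (fun _ : Fin 1 => x) = 1 := by
      rw [winOrd_single ρ W hmech x hx0 hx1, h]
    have hd := hdist 1 one_pos (fun _ => x) (fun _ => 1) (fun _ => 1/2)
      ⟨fun _ => ⟨hx0, hx1⟩, fun _ => by norm_num, fun _ => le_refl _⟩
    rw [hwin] at hd
    rw [swOrd_single, swOrd_single] at hd
    have e0 : |(1:ℝ) - 0| = 1 := by norm_num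
    have e1 : |(1:ℝ) - 1| = 0 := by norm_num
    have e2 : |(1:ℝ)/2 - 0| = 1/2 := by norm_num
    have e3 : |(1:ℝ)/2 - 1| = 1/2 := by rw [abs_of_nonpos (by norm_num)]; norm_num
    rw [e0, e1, e2, e3] at hd
    have hle : x * 1 + (1 - x) * (1/2) ≤
        max (x * 1 + (1 - x) * (1/2)) (x * 0 + (1 - x) * (1/2)) := le_max_left _ _
    nlinarith [hd, hle]
  · intro x hx0 hx14
    have hx1 : x ≤ (1:ℝ) := by linarith
    rcases hmech.1 x hx0 hx1 with h | h
    swap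
    · exact h
    exfalso
    have hwin : winOrd ρ W (fun _ : Fin 1 => x) = 0 := by
      rw [winOrd_single ρ W hmech x hx0 hx1, h]
    have hd := hdist 1 one_pos (fun _ => x) (fun _ => 1/2) (fun _ => 0)
      ⟨fun _ => ⟨hx0, hx1⟩, fun _ => le_refl _, fun _ => by norm_num⟩
    rw [hwin] at hd
    rw [swOrd_single, swOrd_single] at hd
    have e0 : |(1:ℝ)/2 - 0| = 1/2 := by norm_num
    have e1 : |(1:ℝ)/2 - 1| = 1/2 := by rw [abs_of_nonpos (by norm_num)]; norm_num
    have e2 : |(0:ℝ) - 0| = 0 := by norm_num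
    have e3 : |(0:ℝ) - 1| = 1 := by rw [abs_of_nonpos (by norm_num)]; norm_num
    rw [e0, e1, e2, e3] at hd
    have hle : x * (1/2) + (1 - x) * 1 ≤
        max (x * (1/2) + (1 - x) * 0) (x * (1/2) + (1 - x) * 1) := le_max_right _ _
    nlinarith [hd, hle]
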